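/- arXiv:1608.04425 — 4 statements merged into one kernel-verified Lean document; each statement's English description precedes it below -/
import Mathlib

section
/- If vectors x, v in R^n satisfy x^T v = n, ||x||_∞ ≤ 1, and ||v||_2^2 ≤ n, then x = v. -/
theorem stmt_2 (n : ℕ) (hn : 0 < n) (x v : Fin n → ℝ)
    (hxv : ∑ i, x i * v i = (n : ℝ))
    (hx : ∀ i, |x i| ≤ 1)
    (hv : ∑ i, (v i) ^ 2 ≤ (n : ℝ)) :
    x = v := by
  have hx2 : ∑ i, (x i) ^ 2 ≤ (n : ℝ) := by
    calc ∑ i, (x i) ^ 2 ≤ ∑ _i : Fin n, (1 : ℝ) := by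
          apply Finset.sum_le_sum
          intro i _
          have := hx i
          nlinarith [abs_nonneg (x i), sq_abs (x i)]
      _ = (n : ℝ) := by simp
  have hsum : ∑ i, (x i - v i) ^ 2 ≤ 0 := by
    have : ∑ i, (x i - v i) ^ 2 = ∑ i, (x i)^2 - 2 * ∑ i, x i * v i + ∑ i, (v i)^2 := by
      rw [Finset.mul_sum, ← Finset.sum_sub_distrib, ← Finset.sum_add_distrib]
      apply Finset.sum_congr rfl
      intro i _; ring
    rw [this, hxv]; linarith
  funext i
  have h0 : ∑ i, (x i - v i) ^ 2 = 0 := le_antisymm hsum (Finset.sum_nonneg fun i _ => sq_nonneg _)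
  have := (Finset.sum_eq_zero_iff_of_nonneg (fun i _ => sq_nonneg (x i - v i))).mp h0 i (Finset.mem_univ i)
  nlinarith [this]
end

section
/- If vectors x, v in R^n satisfy x_i · v_i = 1 for all i, ||x||_∞ ≤ 1, and ||v||_2^2 ≤ n, then x ∈ {-1,+1}^n, v ∈ {-1,+1}^n, and x = v. -/
theorem stmt_5 (n : ℕ) (hn : 0 < n) (x v : Fin n → ℝ)
    (hxv : ∀ i, x i * v i = 1)
    (hx : ∀ i, |x i| ≤ 1)
    (hv : ∑ i, (v i) ^ 2 ≤ (n : ℝ)) :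
    (∀ i, x i = 1 ∨ x i = -1) ∧ (∀ i, v i = 1 ∨ v i = -1) ∧ x = v := by
  have h1 : ∀ i, 1 ≤ (v i) ^ 2 := by
    intro i
    have h := hxv i
    have hxi := hx i
    have habs : |x i| * |v i| = 1 := by rw [← abs_mul, h]; simp
    nlinarith [abs_nonneg (x i), abs_nonneg (v i), sq_abs (v i), sq_abs (x i)]
  have hsq : ∀ i, (v i) ^ 2 = 1 := by
    by_contra hc
    push_neg at hc
    obtain ⟨j, hj⟩ := hc
    have hjlt : 1 < (v j) ^ 2 := lt_of_le_of_ne (h1 j) (Ne.symm hj)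
    have : (n : ℝ) < ∑ i, (v i) ^ 2 := by
      calc (n : ℝ) = ∑ _i : Fin n, (1 : ℝ) := by simp
        _ < ∑ i, (v i) ^ 2 :=
            Finset.sum_lt_sum (fun i _ => h1 i) ⟨j, Finset.mem_univ j, hjlt⟩
    linarith
  have hveq : ∀ i, v i = 1 ∨ v i = -1 := by
    intro i
    have h := hsq i
    have : (v i - 1) * (v i + 1) = 0 := by nlinarith
    rcases mul_eq_zero.mp this with h | h
    · left; linarith
    · right; linarith
  have hxeq : ∀ i, x i = v i := by
    intro i
    rcases hveq i with h | h <;> have := hxv i <;> rw [h] at this <;> linarith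
  refine ⟨fun i => by rw [hxeq i]; exact hveq i, hveq, funext hxeq⟩
end

section
/- For every x ∈ R^n with ||x||_∞ ≤ 1 and x ≠ sign(x), the inequality n - √n·||x||_2 ≥ (1/2)·||sign(x) - x||_2 holds; equivalently the infimum of h(x) = (n - √n||x||_2)/||sign(x) - x||_2 over such x is at least 1/2. -/
/-- componentwise signum with the convention sign(0) = +1 (one of the ±1 choices) -/
noncomputable def sgn (t : ℝ) : ℝ := if 0 ≤ t then 1 else -1

theorem stmt_8 (n : ℕ) (hn : 0 < n) (x : Fin n → ℝ)
    (hx : ∀ i, |x i| ≤ 1)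
    (hne : (fun i => sgn (x i)) ≠ x) :
    (n : ℝ) - Real.sqrt n * Real.sqrt (∑ i, (x i) ^ 2) ≥
      (1 / 2) * Real.sqrt (∑ i, (sgn (x i) - x i) ^ 2) := by
  have key : ∀ i, (sgn (x i) - x i) ^ 2 = (1 - |x i|) ^ 2 := by
    intro i
    unfold sgn
    rcases le_or_gt 0 (x i) with h | h
    · rw [if_pos h, abs_of_nonneg h]
    · rw [if_neg (not_le.mpr h), abs_of_neg h]; ring
  set S := ∑ i, (x i) ^ 2 with hS
  have hSn : S ≤ (n : ℝ) := by
    calc S ≤ ∑ _i : Fin n, (1 : ℝ) :=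
          Finset.sum_le_sum fun i _ => by
            nlinarith [hx i, sq_abs (x i), abs_nonneg (x i)]
      _ = n := by simp
  have hS0 : 0 ≤ S := Finset.sum_nonneg fun i _ => sq_nonneg _
  have hA : ∀ i ∈ Finset.univ, (0 : ℝ) ≤ 1 - |x i| := fun i _ => by linarith [hx i]
  have h1 : Real.sqrt (∑ i, (sgn (x i) - x i) ^ 2) ≤ (n : ℝ) - S := by
    have e : ∑ i, (sgn (x i) - x i) ^ 2 = ∑ i, (1 - |x i|) ^ 2 :=
      Finset.sum_congr rfl fun i _ => key i
    rw [e]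
    have h2 : ∑ i, (1 - |x i|) ^ 2 ≤ (∑ i, (1 - |x i|)) ^ 2 := by
      calc ∑ i, (1 - |x i|) ^ 2
          ≤ ∑ i, (1 - |x i|) * (∑ j, (1 - |x j|)) := by
            apply Finset.sum_le_sum; intro i hi
            have hs := Finset.single_le_sum hA (Finset.mem_univ i)
            nlinarith [hA i (Finset.mem_univ i)]
        _ = (∑ i, (1 - |x i|)) ^ 2 := by rw [← Finset.sum_mul]; ring
    have h3 : Real.sqrt (∑ i, (1 - |x i|) ^ 2) ≤ ∑ i, (1 - |x i|) := by
      have := Real.sqrt_le_sqrt h2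
      rwa [Real.sqrt_sq (Finset.sum_nonneg hA)] at this
    refine h3.trans ?_
    have h4 : ∑ i, (1 - |x i|) ≤ ∑ i, (1 - (x i) ^ 2) := by
      apply Finset.sum_le_sum; intro i _
      nlinarith [sq_abs (x i), abs_nonneg (x i), hx i]
    calc ∑ i, (1 - |x i|) ≤ ∑ i, (1 - (x i) ^ 2) := h4
      _ = n - S := by rw [Finset.sum_sub_distrib]; simp [hS]
  have hm : Real.sqrt n * Real.sqrt n = (n : ℝ) := Real.mul_self_sqrt (by positivity)
  have hr : Real.sqrt S * Real.sqrt S = S := Real.mul_self_sqrt hS0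
  have h5 : (n : ℝ) - Real.sqrt n * Real.sqrt S ≥ ((n : ℝ) - S) / 2 := by
    nlinarith [sq_nonneg (Real.sqrt n - Real.sqrt S)]
  linarith [Real.sqrt_nonneg (∑ i, (sgn (x i) - x i) ^ 2)]
end

section
/- For every natural number n ≥ 1 and every δ with 0 < δ < 1, the quantity p(δ) = (n - √(n² - n + δ²n))/(1 - δ) is strictly greater than 1/2. -/
theorem stmt_10 (n : ℕ) (hn : 1 ≤ n) (δ : ℝ) (hδ0 : 0 < δ) (hδ1 : δ < 1) :
    ((n : ℝ) - Real.sqrt ((n : ℝ) ^ 2 - n + δ ^ 2 * n)) / (1 - δ) > 1 / 2 := by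
  have hn1 : (1:ℝ) ≤ (n:ℝ) := by exact_mod_cast hn
  have h : Real.sqrt ((n:ℝ)^2 - n + δ^2*n) < (n:ℝ) - (1-δ)/2 := by
    rw [Real.sqrt_lt' (by linarith)]
    nlinarith [mul_pos (mul_pos hδ0 (sub_pos.mpr hδ1)) (lt_of_lt_of_le one_pos hn1), sq_nonneg (1-δ)]
  rw [gt_iff_lt, lt_div_iff₀ (by linarith)]
  linarith
end
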